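/- arXiv:1604.06372 — 2 statements merged into one kernel-verified Lean document; each statement's English description precedes it below -/
import Mathlib

section
/- For a regular scale factor a, the Fermi radius ρ_{M_τ} = ∫_0^τ a(t)/√(a(τ)²−a(t)²) dt satisfies ρ_{M_τ} ≤ (π/2)·a(τ)/a'(τ), i.e. ρ_{M_τ} ≤ (π/2)·(1/H(τ)) where H(τ)=a'(τ)/a(τ). -/
/-!
The Hubble parameter `H = a'/a` (`logDeriv a`) has derivative `(a a'' - a'^2)/a^2`. This is
nonpositive by regularity where `a' ≠ 0`, and also where `a' = 0`, since such a point is a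
minimum of `a' ≥ 0`, so that `a'' = 0` there. Hence `H` is antitone. This forces `a' > 0` (if
`a'(t) ≤ 0` then `a' ≤ 0` on `[t, ∞)`, against strict monotonicity) and gives
`a(t) ≤ (a(τ)/a'(τ)) a'(t)` for `t ≤ τ`. Bounding the integrand accordingly, what remains is
`∫₀^τ a'/√(a(τ)² - a²) = arcsin 1 - arcsin 0 = π/2`.
-/

open Set Filter Topology MeasureTheory Real

theorem MonotoneOn.deriv_nonneg_of_mem_nhds {g : ℝ → ℝ} {s : Set ℝ} {x : ℝ}
    (hg : MonotoneOn g s) (hs : s ∈ 𝓝 x) : 0 ≤ deriv g x := by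
  rw [← derivWithin_of_mem_nhds hs]
  exact hg.derivWithin_nonneg

namespace intervalIntegral

theorem integral_mono_on_Ioo_of_nonneg {f g : ℝ → ℝ} {a b : ℝ} (hab : a ≤ b)
    (hg : IntervalIntegrable g volume a b) (hf : ∀ x ∈ Ioo a b, 0 ≤ f x)
    (hfg : ∀ x ∈ Ioo a b, f x ≤ g x) : ∫ x in a..b, f x ≤ ∫ x in a..b, g x := by
  rw [integral_of_le hab, integral_of_le hab, integral_Ioc_eq_integral_Ioo,
    integral_Ioc_eq_integral_Ioo]
  exact integral_mono_of_nonneg (ae_restrict_of_forall_mem measurableSet_Ioo hf)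
    (hg.1.mono_set Ioo_subset_Ioc_self) (ae_restrict_of_forall_mem measurableSet_Ioo hfg)

end intervalIntegral

theorem HasDerivAt.arcsin_div_const {a : ℝ → ℝ} {a' c t : ℝ} (ha : HasDerivAt a a' t)
    (hc : 0 < c) (hlt : |a t| < c) :
    HasDerivAt (fun x => arcsin (a x / c)) (a' / √(c ^ 2 - a t ^ 2)) t := by
  obtain ⟨hlo, hhi⟩ := abs_lt.1 hlt
  have hsq : 0 < c ^ 2 - a t ^ 2 := by nlinarith
  have hm1 : a t / c ≠ -1 := by
    rw [Ne, div_eq_iff hc.ne']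
    linarith
  have h1 : a t / c ≠ 1 := by
    rw [Ne, div_eq_iff hc.ne']
    linarith
  refine ((hasDerivAt_arcsin hm1 h1).comp t (ha.div_const c)).congr_deriv ?_
  have hsqrt : √(1 - (a t / c) ^ 2) = √(c ^ 2 - a t ^ 2) / c := by
    rw [show 1 - (a t / c) ^ 2 = (c ^ 2 - a t ^ 2) / c ^ 2 by field_simp, sqrt_div hsq.le,
      sqrt_sq hc.le]
  rw [hsqrt]
  field_simp

theorem integral_deriv_div_sqrt_sq_sub_sq {a : ℝ → ℝ} {τ : ℝ} (hτ : 0 < τ)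
    (ha0 : a 0 = 0) (hmono : StrictMonoOn a (Icc 0 τ)) (hcont : ContinuousOn a (Icc 0 τ))
    (hdiff : DifferentiableOn ℝ a (Ioo 0 τ)) :
    IntervalIntegrable (fun t => deriv a t / √(a τ ^ 2 - a t ^ 2)) volume 0 τ ∧
      ∫ t in (0 : ℝ)..τ, deriv a t / √(a τ ^ 2 - a t ^ 2) = π / 2 := by
  have haτ : 0 < a τ := ha0 ▸ hmono (left_mem_Icc.2 hτ.le) (right_mem_Icc.2 hτ.le) hτ
  have hF : ∀ t ∈ Ioo 0 τ, HasDerivAt (fun x => arcsin (a x / a τ))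
      (deriv a t / √(a τ ^ 2 - a t ^ 2)) t := by
    intro t ht
    have hat : 0 < a t := ha0 ▸ hmono (left_mem_Icc.2 hτ.le) (Ioo_subset_Icc_self ht) ht.1
    have htτ : a t < a τ := hmono (Ioo_subset_Icc_self ht) (right_mem_Icc.2 hτ.le) ht.2
    exact ((hdiff t ht).differentiableAt (isOpen_Ioo.mem_nhds ht)).hasDerivAt.arcsin_div_const
      haτ (abs_lt.2 ⟨by linarith, htτ⟩)
  have hFcont : ContinuousOn (fun x => arcsin (a x / a τ)) (Icc 0 τ) :=
    continuous_arcsin.comp_continuousOn (hcont.div_const _)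
  have hF'nonneg : ∀ t ∈ Ioo 0 τ, 0 ≤ deriv a t / √(a τ ^ 2 - a t ^ 2) := fun t ht =>
    div_nonneg ((hmono.monotoneOn.mono Ioo_subset_Icc_self).deriv_nonneg_of_mem_nhds
      (isOpen_Ioo.mem_nhds ht)) (sqrt_nonneg _)
  have hint : IntervalIntegrable (fun t => deriv a t / √(a τ ^ 2 - a t ^ 2)) volume 0 τ := by
    apply intervalIntegral.intervalIntegrable_deriv_of_nonneg (g := fun x => arcsin (a x / a τ))
    · rwa [uIcc_of_le hτ.le]
    all_goals rwa [min_eq_left hτ.le, max_eq_right hτ.le]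
  refine ⟨hint, ?_⟩
  rw [intervalIntegral.integral_eq_sub_of_hasDerivAt_of_le hτ.le hFcont hF hint,
    div_self haτ.ne', ha0, zero_div, arcsin_one, arcsin_zero, sub_zero]

section ScaleFactor

variable {a : ℝ → ℝ}

theorem mul_deriv_deriv_le_deriv_sq {t : ℝ}
    (hreg : a t * deriv (deriv a) t / deriv a t ^ 2 ≤ 1)
    (hnonneg : ∀ᶠ x in 𝓝 t, 0 ≤ deriv a x) :
    a t * deriv (deriv a) t ≤ deriv a t ^ 2 := by
  by_cases h : deriv a t = 0
  · have hmin : IsLocalMin (deriv a) t := hnonneg.mono fun x hx => h ▸ hx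
    simp [hmin.deriv_eq_zero, h]
  · exact (div_le_one (by positivity)).1 hreg

theorem antitoneOn_logDeriv_of_mul_deriv_deriv_le {s : Set ℝ} (hs : IsOpen s)
    (hconv : Convex ℝ s) (hpos : ∀ t ∈ s, 0 < a t) (hdiff : DifferentiableOn ℝ a s)
    (hdiff' : DifferentiableOn ℝ (deriv a) s)
    (hle : ∀ t ∈ s, a t * deriv (deriv a) t ≤ deriv a t ^ 2) : AntitoneOn (logDeriv a) s := by
  have hH : ∀ t ∈ s, HasDerivAt (logDeriv a)
      ((deriv (deriv a) t * a t - deriv a t * deriv a t) / a t ^ 2) t := fun t ht =>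
    ((hdiff' t ht).differentiableAt (hs.mem_nhds ht)).hasDerivAt.div
      ((hdiff t ht).differentiableAt (hs.mem_nhds ht)).hasDerivAt (hpos t ht).ne'
  refine antitoneOn_of_deriv_nonpos hconv (fun t ht => (hH t ht).continuousAt.continuousWithinAt)
    (by rw [hs.interior_eq]; exact fun t ht => (hH t ht).differentiableAt.differentiableWithinAt)
    fun t ht => ?_
  rw [hs.interior_eq] at ht
  rw [(hH t ht).deriv]
  exact div_nonpos_of_nonpos_of_nonneg (by nlinarith [hle t ht]) (sq_nonneg _)

theorem deriv_pos_of_antitoneOn_logDeriv {t u : ℝ} (htu : t < u)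
    (hmono : StrictMonoOn a (Icc t u)) (hdiff : DifferentiableOn ℝ a (Icc t u))
    (hpos : ∀ x ∈ Icc t u, 0 < a x) (hanti : AntitoneOn (logDeriv a) (Icc t u)) :
    0 < deriv a t := by
  by_contra! h
  obtain ⟨c, hc, hslope⟩ := exists_deriv_eq_slope a htu hdiff.continuousOn
    (hdiff.mono Ioo_subset_Icc_self)
  have hHc : logDeriv a c ≤ 0 :=
    (hanti (left_mem_Icc.2 htu.le) (Ioo_subset_Icc_self hc) hc.1.le).trans
      (div_nonpos_of_nonpos_of_nonneg h (hpos t (left_mem_Icc.2 htu.le)).le)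
  have hc' : deriv a c ≤ 0 := by
    simpa using (div_le_iff₀ (hpos c (Ioo_subset_Icc_self hc))).1 hHc
  have : 0 < (a u - a t) / (u - t) :=
    div_pos (sub_pos.2 (hmono (left_mem_Icc.2 htu.le) (right_mem_Icc.2 htu.le) htu))
      (sub_pos.2 htu)
  linarith

theorem le_div_deriv_mul_deriv_of_logDeriv_le {t τ : ℝ} (hat : 0 < a t) (haτ : 0 < a τ)
    (hτ : 0 < deriv a τ) (hH : logDeriv a τ ≤ logDeriv a t) :
    a t ≤ a τ / deriv a τ * deriv a t := by
  rw [logDeriv_apply, logDeriv_apply, div_le_div_iff₀ haτ hat] at hH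
  rw [div_mul_eq_mul_div, le_div_iff₀ hτ]
  linarith

end ScaleFactor

/-- The Fermi radius is bounded by `(π/2) / H(τ)` for a regular scale factor. -/
theorem fermi_radius_bound (a : ℝ → ℝ)
    (ha0 : a 0 = 0)
    (hmono : StrictMonoOn a (Set.Ici 0))
    (hcont : ContinuousOn a (Set.Ici 0))
    (hsmooth : ContDiffOn ℝ 2 a (Set.Ioi 0))
    (hreg : ∀ t > (0:ℝ), a t * deriv (deriv a) t / (deriv a t) ^ 2 ≤ 1) :
    ∀ τ > (0:ℝ),
      (∫ t in (0:ℝ)..τ, a t / Real.sqrt ((a τ) ^ 2 - (a t) ^ 2)) ≤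
        (Real.pi / 2) * (a τ / deriv a τ) := by
  intro τ hτ
  have hdiff : DifferentiableOn ℝ a (Ioi 0) := hsmooth.differentiableOn (by norm_num)
  have hdiff' : DifferentiableOn ℝ (deriv a) (Ioi 0) :=
    (hsmooth.deriv_of_isOpen (m := 1) isOpen_Ioi (by norm_num)).differentiableOn (by norm_num)
  have hpos : ∀ t ∈ Ioi (0 : ℝ), 0 < a t := fun t ht =>
    ha0 ▸ hmono self_mem_Ici (mem_Ici.2 (le_of_lt ht)) ht
  have hderiv_nonneg : ∀ t ∈ Ioi (0 : ℝ), 0 ≤ deriv a t := fun t ht =>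
    (hmono.monotoneOn.mono Ioi_subset_Ici_self).deriv_nonneg_of_mem_nhds (isOpen_Ioi.mem_nhds ht)
  have hanti : AntitoneOn (logDeriv a) (Ioi 0) :=
    antitoneOn_logDeriv_of_mul_deriv_deriv_le isOpen_Ioi (convex_Ioi 0) hpos hdiff hdiff'
      fun t ht => mul_deriv_deriv_le_deriv_sq (hreg t ht)
        (eventually_of_mem (isOpen_Ioi.mem_nhds ht) hderiv_nonneg)
  have hIcc : Icc τ (τ + 1) ⊆ Ioi 0 := fun x hx => hτ.trans_le hx.1
  have hτ' : 0 < deriv a τ := deriv_pos_of_antitoneOn_logDeriv (lt_add_one τ)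
    (hmono.mono (hIcc.trans Ioi_subset_Ici_self)) (hdiff.mono hIcc) (fun x hx => hpos x (hIcc hx))
    (hanti.mono hIcc)
  obtain ⟨hint, hval⟩ := integral_deriv_div_sqrt_sq_sub_sq hτ ha0
    (hmono.mono Icc_subset_Ici_self) (hcont.mono Icc_subset_Ici_self)
    (hdiff.mono Ioo_subset_Ioi_self)
  calc (∫ t in (0:ℝ)..τ, a t / √(a τ ^ 2 - a t ^ 2))
      ≤ ∫ t in (0:ℝ)..τ, a τ / deriv a τ * (deriv a t / √(a τ ^ 2 - a t ^ 2)) := by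
        refine intervalIntegral.integral_mono_on_Ioo_of_nonneg hτ.le (hint.const_mul _)
          (fun t ht => div_nonneg (hpos t ht.1).le (sqrt_nonneg _)) fun t ht => ?_
        rw [← mul_div_assoc]
        exact div_le_div_of_nonneg_right (le_div_deriv_mul_deriv_of_logDeriv_le (hpos t ht.1)
          (hpos τ hτ) hτ' (hanti ht.1 (mem_Ioi.2 hτ) ht.2.le)) (sqrt_nonneg _)
    _ = π / 2 * (a τ / deriv a τ) := by
        rw [intervalIntegral.integral_const_mul, hval, mul_comm]
end

section
/- Let a be a strongly regular scale factor and for τ > 0 define g_ττ(τ,0) = −[1 − a'(τ)·∫_0^τ (a''(t)/a'(t)²)·(a(τ)/√(a(τ)²−a(t)²) − 1) dt]². Then 0 < −g_ττ(τ,0) < ∞; in particular the limiting metric coefficient at the big bang is finite and nonzero. -/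
/-!
Write `A = a τ`. The upper bound `a a'' ≤ a'²` makes `a' / a` nonincreasing, so
`a'(τ) a(t) ≤ a'(t) A` for `t ≤ τ`; together with `a'' / a'² ≤ 1 / a` this bounds `a'(τ)` times
the integrand by the derivative of `a / (A + √(A² - a²))`, which increases from `0` to `1` on
`[0, τ]`. Since `a(0) = 0`, `a' / a` is unbounded near `0`, which improves the bound by a factor
`2` on some `[0, δ]` and makes the inequality strict.

Positivity of `a'` comes from the lower bound `-K`: the function `a' a ^ K` is nondecreasing, and
by the mean value theorem `a'` is positive somewhere in `(t / 2, t)`.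
-/

open Set Filter MeasureTheory intervalIntegral

/-- `tan (θ / 2)` for `sin θ = u / A`. -/
noncomputable def halfAngleTan (A u : ℝ) : ℝ := u / (A + √(A ^ 2 - u ^ 2))

lemma halfAngleTan_zero (A : ℝ) : halfAngleTan A 0 = 0 := by
  simp [halfAngleTan]

lemma halfAngleTan_self {A : ℝ} (hA : 0 < A) : halfAngleTan A A = 1 := by
  simp [halfAngleTan, hA.ne']

lemma halfAngleTan_pos {A u : ℝ} (hA : 0 < A) (hu : 0 < u) : 0 < halfAngleTan A u := by
  unfold halfAngleTan; positivity

lemma HasDerivAt.halfAngleTan {u : ℝ → ℝ} {u' A t : ℝ} (hu : HasDerivAt u u' t)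
    (hA : |u t| < A) :
    HasDerivAt (fun x => halfAngleTan A (u x))
      (A * u' / (√(A ^ 2 - u t ^ 2) * (A + √(A ^ 2 - u t ^ 2)))) t := by
  have hA0 : 0 < A := (abs_nonneg _).trans_lt hA
  have hsq : 0 < A ^ 2 - u t ^ 2 := by
    have := sq_lt_sq' (neg_lt_of_abs_lt hA) (lt_of_abs_lt hA); linarith
  have hr0 : 0 < √(A ^ 2 - u t ^ 2) := Real.sqrt_pos.2 hsq
  have hr2 : √(A ^ 2 - u t ^ 2) ^ 2 = A ^ 2 - u t ^ 2 := Real.sq_sqrt hsq.le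
  have hroot : HasDerivAt (fun x => √(A ^ 2 - u x ^ 2))
      (-(2 * u t * u') / (2 * √(A ^ 2 - u t ^ 2))) t :=
    ((hu.pow 2).const_sub (A ^ 2)).sqrt hsq.ne' |>.congr_deriv (by simp)
  refine (hu.div (hroot.const_add A) (by positivity)).congr_deriv ?_
  field_simp
  linear_combination u' * hr2

lemma intervalIntegrable_and_integral_eq_sub_of_nonneg {f F : ℝ → ℝ} {p q : ℝ} (hpq : p ≤ q)
    (hF : ContinuousOn F (Icc p q)) (hderiv : ∀ x ∈ Ioo p q, HasDerivAt F (f x) x)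
    (hf : ∀ x ∈ Ioo p q, 0 ≤ f x) :
    IntervalIntegrable f volume p q ∧ ∫ x in p..q, f x = F q - F p := by
  have hint : IntervalIntegrable f volume p q :=
    (intervalIntegrable_iff_integrableOn_Ioc_of_le hpq).2
      (integrableOn_deriv_of_nonneg hF hderiv hf)
  exact ⟨hint, integral_eq_sub_of_hasDerivAt_of_le hpq hF hderiv hint⟩

lemma mul_mul_div_sqrt_sub_one_le {u A x c d : ℝ} (hu : 0 < u) (huA : u < A) (hx : x ≤ 1 / u)
    (hc : 0 ≤ c) (hcd : c * u ≤ d * A) :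
    c * (x * (A / √(A ^ 2 - u ^ 2) - 1)) ≤
      A * d / (√(A ^ 2 - u ^ 2) * (A + √(A ^ 2 - u ^ 2))) := by
  have hsq : 0 < A ^ 2 - u ^ 2 := by nlinarith
  set r := √(A ^ 2 - u ^ 2) with hr
  have hr0 : 0 < r := Real.sqrt_pos.2 hsq
  have hr2 : r ^ 2 = A ^ 2 - u ^ 2 := Real.sq_sqrt hsq.le
  have hfac : 0 ≤ A / r - 1 := by
    rw [sub_nonneg, le_div_iff₀ hr0]; nlinarith
  calc c * (x * (A / r - 1)) ≤ c * (1 / u * (A / r - 1)) := by gcongr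
    _ = c * u * (A / r - 1) / u ^ 2 := by field_simp
    _ ≤ d * A * (A / r - 1) / u ^ 2 := by gcongr
    _ = A * d / (r * (A + r)) := by
      have : A + r ≠ 0 := by linarith
      field_simp
      linear_combination (-(d * A)) * hr2

section ScaleFactor

variable {a : ℝ → ℝ} {s : Set ℝ} {t : ℝ}

lemma ContDiffOn.hasDerivAt_of_isOpen (ha : ContDiffOn ℝ 2 a s) (hs : IsOpen s) (ht : t ∈ s) :
    HasDerivAt a (deriv a t) t :=
  ((ha.contDiffAt (hs.mem_nhds ht)).differentiableAt (by norm_num)).hasDerivAt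

lemma ContDiffOn.hasDerivAt_deriv_of_isOpen (ha : ContDiffOn ℝ 2 a s) (hs : IsOpen s)
    (ht : t ∈ s) : HasDerivAt (deriv a) (deriv (deriv a) t) t :=
  (((ha.deriv_of_isOpen hs (by norm_num : (1 : WithTop ℕ∞) + 1 ≤ 2)).contDiffAt
    (hs.mem_nhds ht)).differentiableAt one_ne_zero).hasDerivAt

lemma MonotoneOn.deriv_nonneg_of_isOpen (ha : MonotoneOn a s) (hs : IsOpen s) (ht : t ∈ s) :
    0 ≤ deriv a t := by
  simpa only [derivWithin_of_isOpen hs ht] using ha.derivWithin_nonneg (x := t)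

lemma pos_of_strictMonoOn_Ici (ha0 : a 0 = 0) (hmono : StrictMonoOn a (Ici 0)) (ht : 0 < t) :
    0 < a t := by
  simpa [ha0] using hmono self_mem_Ici ht.le ht

/-- Where `a' > 0` the derivative is `a ^ (K - 1) * (a * a'' + K * a' ^ 2) ≥ 0`; at a zero of
`a' ≥ 0` it is `a ^ K * a'' = 0`, the zero being a local minimum of `a'`. -/
theorem monotoneOn_deriv_mul_rpow (ha0 : a 0 = 0) (hmono : StrictMonoOn a (Ici 0))
    (hsmooth : ContDiffOn ℝ 2 a (Ioi 0)) (K : ℝ)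
    (hKbound : ∀ t > (0:ℝ), -K ≤ a t * deriv (deriv a) t / (deriv a t) ^ 2) :
    MonotoneOn (fun t => deriv a t * a t ^ K) (Ioi 0) := by
  have hnonneg : ∀ t ∈ Ioi (0:ℝ), 0 ≤ deriv a t := fun t ht =>
    (hmono.monotoneOn.mono Ioi_subset_Ici_self).deriv_nonneg_of_isOpen isOpen_Ioi ht
  have hderiv : ∀ t ∈ Ioi (0:ℝ), HasDerivAt (fun t => deriv a t * a t ^ K)
      (deriv (deriv a) t * a t ^ K + deriv a t * (deriv a t * K * a t ^ (K - 1))) t :=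
    fun t ht => (hsmooth.hasDerivAt_deriv_of_isOpen isOpen_Ioi ht).mul
      ((hsmooth.hasDerivAt_of_isOpen isOpen_Ioi ht).rpow_const
        (Or.inl (pos_of_strictMonoOn_Ici ha0 hmono ht).ne'))
  refine monotoneOn_of_hasDerivWithinAt_nonneg (convex_Ioi 0)
    (fun t ht => (hderiv t ht).continuousAt.continuousWithinAt)
    (fun t ht => (hderiv t (interior_subset ht)).hasDerivWithinAt) (fun t ht => ?_)
  rw [interior_Ioi] at ht
  have hat := pos_of_strictMonoOn_Ici ha0 hmono ht
  rcases (hnonneg t ht).eq_or_lt with hzero | hpos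
  · have hmin : IsLocalMin (deriv a) t :=
      eventually_of_mem (isOpen_Ioi.mem_nhds ht) fun y hy => hzero ▸ hnonneg y hy
    simp [hmin.deriv_eq_zero, ← hzero]
  · have hK : -K * deriv a t ^ 2 ≤ a t * deriv (deriv a) t := by
      have := hKbound t ht
      rwa [le_div_iff₀ (by positivity)] at this
    have hpow : a t ^ K = a t * a t ^ (K - 1) := by
      rw [Real.rpow_sub_one hat.ne']; field_simp
    rw [hpow]
    have : 0 < a t ^ (K - 1) := Real.rpow_pos_of_pos hat _
    nlinarith

theorem deriv_pos_of_stronglyRegular (ha0 : a 0 = 0) (hmono : StrictMonoOn a (Ici 0))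
    (hsmooth : ContDiffOn ℝ 2 a (Ioi 0)) (K : ℝ)
    (hKbound : ∀ t > (0:ℝ), -K ≤ a t * deriv (deriv a) t / (deriv a t) ^ 2) (ht : 0 < t) :
    0 < deriv a t := by
  have ht2 : 0 < t / 2 := half_pos ht
  obtain ⟨s, hs, hslope⟩ := exists_deriv_eq_slope a (half_lt_self ht)
    (fun x hx => (hsmooth.hasDerivAt_of_isOpen isOpen_Ioi
      (ht2.trans_le hx.1)).continuousAt.continuousWithinAt)
    (fun x hx => (hsmooth.hasDerivAt_of_isOpen isOpen_Ioi
      (ht2.trans hx.1)).differentiableAt.differentiableWithinAt)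
  have hs0 : 0 < s := ht2.trans hs.1
  have hds : 0 < deriv a s := by
    rw [hslope]
    exact div_pos (sub_pos.2 (hmono ht2.le ht.le (half_lt_self ht))) (by linarith)
  have hmul : deriv a s * a s ^ K ≤ deriv a t * a t ^ K :=
    monotoneOn_deriv_mul_rpow ha0 hmono hsmooth K hKbound hs0 ht hs.2.le
  exact pos_of_mul_pos_left ((mul_pos hds (Real.rpow_pos_of_pos
    (pos_of_strictMonoOn_Ici ha0 hmono hs0) K)).trans_le hmul)
    (Real.rpow_pos_of_pos (pos_of_strictMonoOn_Ici ha0 hmono ht) K).le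

theorem antitoneOn_deriv_div (ha0 : a 0 = 0) (hmono : StrictMonoOn a (Ici 0))
    (hsmooth : ContDiffOn ℝ 2 a (Ioi 0))
    (hreg : ∀ t > (0:ℝ), a t * deriv (deriv a) t / (deriv a t) ^ 2 ≤ 1)
    (hpos : ∀ t > (0:ℝ), 0 < deriv a t) :
    AntitoneOn (fun t => deriv a t / a t) (Ioi 0) := by
  have hderiv : ∀ t ∈ Ioi (0:ℝ), HasDerivAt (fun t => deriv a t / a t)
      ((deriv (deriv a) t * a t - deriv a t * deriv a t) / a t ^ 2) t :=
    fun t ht => (hsmooth.hasDerivAt_deriv_of_isOpen isOpen_Ioi ht).div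
      (hsmooth.hasDerivAt_of_isOpen isOpen_Ioi ht) (pos_of_strictMonoOn_Ici ha0 hmono ht).ne'
  refine antitoneOn_of_hasDerivWithinAt_nonpos (convex_Ioi 0)
    (fun t ht => (hderiv t ht).continuousAt.continuousWithinAt)
    (fun t ht => (hderiv t (interior_subset ht)).hasDerivWithinAt) (fun t ht => ?_)
  rw [interior_Ioi] at ht
  have hreg' := hreg t ht
  rw [div_le_one (pow_pos (hpos t ht) 2)] at hreg'
  exact div_nonpos_of_nonpos_of_nonneg (by linarith) (sq_nonneg _)

/-- Otherwise `a t * exp (-L * t)` would be antitone on `[0, τ]`, which is absurd as it vanishes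
at `0` and is positive at `τ`. -/
theorem exists_lt_deriv_div (ha0 : a 0 = 0) (hmono : StrictMonoOn a (Ici 0))
    (hcont : ContinuousOn a (Ici 0)) (hsmooth : ContDiffOn ℝ 2 a (Ioi 0)) (L : ℝ) {τ : ℝ}
    (hτ : 0 < τ) : ∃ δ ∈ Ioo 0 τ, L < deriv a δ / a δ := by
  by_contra! hle
  have hanti : AntitoneOn (fun t => a t * Real.exp (-L * t)) (Icc 0 τ) := by
    refine antitoneOn_of_hasDerivWithinAt_nonpos (convex_Icc 0 τ)
      (f' := fun t => (deriv a t - L * a t) * Real.exp (-L * t))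
      ((hcont.mono Icc_subset_Ici_self).mul (by fun_prop)) (fun t ht => ?_) (fun t ht => ?_)
    all_goals rw [interior_Icc] at ht
    · exact ((hsmooth.hasDerivAt_of_isOpen isOpen_Ioi ht.1).mul
        (((hasDerivAt_id' t).const_mul (-L)).exp)).hasDerivWithinAt.congr_deriv (by ring)
    · have hat := pos_of_strictMonoOn_Ici ha0 hmono ht.1
      have := hle t ht
      rw [div_le_iff₀ hat] at this
      exact mul_nonpos_of_nonpos_of_nonneg (by linarith) (Real.exp_pos _).le
  have := hanti (left_mem_Icc.2 hτ.le) (right_mem_Icc.2 hτ.le) hτ.le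
  simp only [ha0, zero_mul] at this
  exact this.not_gt (mul_pos (pos_of_strictMonoOn_Ici ha0 hmono hτ) (Real.exp_pos _))

theorem mul_integrand_le (ha0 : a 0 = 0) (hmono : StrictMonoOn a (Ici 0))
    (hreg : ∀ t > (0:ℝ), a t * deriv (deriv a) t / (deriv a t) ^ 2 ≤ 1)
    (hpos : ∀ t > (0:ℝ), 0 < deriv a t) {τ k : ℝ} (hτ : 0 < τ) (ht : t ∈ Ioo 0 τ) (hk : 0 ≤ k)
    (hkt : k * (deriv a τ * a t) ≤ deriv a t * a τ) :
    k * (deriv a τ * (deriv (deriv a) t / deriv a t ^ 2 * (a τ / √(a τ ^ 2 - a t ^ 2) - 1))) ≤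
      a τ * deriv a t / (√(a τ ^ 2 - a t ^ 2) * (a τ + √(a τ ^ 2 - a t ^ 2))) := by
  have hat := pos_of_strictMonoOn_Ici ha0 hmono ht.1
  have hx : deriv (deriv a) t / deriv a t ^ 2 ≤ 1 / a t := by
    rw [le_div_iff₀ hat, mul_comm, ← mul_div_assoc]; exact hreg t ht.1
  rw [← mul_assoc]
  exact mul_mul_div_sqrt_sub_one_le hat (hmono ht.1.le hτ.le ht.2) hx
    (mul_nonneg hk (hpos τ hτ).le) (by linarith)

theorem integral_eq_halfAngleTan_sub (ha0 : a 0 = 0) (hmono : StrictMonoOn a (Ici 0))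
    (hcont : ContinuousOn a (Ici 0)) (hsmooth : ContDiffOn ℝ 2 a (Ioi 0))
    (hpos : ∀ t > (0:ℝ), 0 < deriv a t) {τ p q : ℝ} (hτ : 0 < τ) (hp : 0 ≤ p) (hpq : p ≤ q)
    (hq : q ≤ τ) :
    IntervalIntegrable
      (fun t => a τ * deriv a t / (√(a τ ^ 2 - a t ^ 2) * (a τ + √(a τ ^ 2 - a t ^ 2))))
      volume p q ∧
    ∫ t in p..q, a τ * deriv a t / (√(a τ ^ 2 - a t ^ 2) * (a τ + √(a τ ^ 2 - a t ^ 2))) =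
      halfAngleTan (a τ) (a q) - halfAngleTan (a τ) (a p) := by
  have haτ := pos_of_strictMonoOn_Ici ha0 hmono hτ
  have hbound : ∀ x ∈ Ioo p q, 0 < x ∧ |a x| < a τ := fun x hx =>
    have hx0 : 0 < x := hp.trans_lt hx.1
    ⟨hx0, abs_lt.2 ⟨by linarith [pos_of_strictMonoOn_Ici ha0 hmono hx0],
      hmono hx0.le hτ.le (hx.2.trans_le hq)⟩⟩
  refine intervalIntegrable_and_integral_eq_sub_of_nonneg hpq ?_
    (fun x hx => (hsmooth.hasDerivAt_of_isOpen isOpen_Ioi (hbound x hx).1).halfAngleTan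
      (hbound x hx).2)
    (fun x hx => have := hpos x (hbound x hx).1; by positivity)
  have hcont' : ContinuousOn a (Icc p q) := hcont.mono fun x hx => hp.trans hx.1
  exact hcont'.div (continuousOn_const.add (continuousOn_const.sub (hcont'.pow 2)).sqrt)
    fun x _ => by positivity

theorem deriv_mul_integral_lt_one (ha0 : a 0 = 0) (hmono : StrictMonoOn a (Ici 0))
    (hcont : ContinuousOn a (Ici 0)) (hsmooth : ContDiffOn ℝ 2 a (Ioi 0))
    (hreg : ∀ t > (0:ℝ), a t * deriv (deriv a) t / (deriv a t) ^ 2 ≤ 1)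
    (hpos : ∀ t > (0:ℝ), 0 < deriv a t) {τ : ℝ} (hτ : 0 < τ) :
    deriv a τ * ∫ t in (0:ℝ)..τ, (deriv (deriv a) t / (deriv a t) ^ 2) *
      (a τ / √((a τ) ^ 2 - (a t) ^ 2) - 1) < 1 := by
  set G : ℝ → ℝ := fun t => deriv (deriv a) t / deriv a t ^ 2 * (a τ / √(a τ ^ 2 - a t ^ 2) - 1)
  by_cases hGint : IntervalIntegrable G volume 0 τ
  swap
  · simp [intervalIntegral.integral_undef hGint]
  have haτ := pos_of_strictMonoOn_Ici ha0 hmono hτ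
  have hanti := antitoneOn_deriv_div ha0 hmono hsmooth hreg hpos
  obtain ⟨δ, hδ, hLδ⟩ := exists_lt_deriv_div ha0 hmono hcont hsmooth (2 * deriv a τ / a τ) hτ
  obtain ⟨hH₁, hF₁⟩ := integral_eq_halfAngleTan_sub ha0 hmono hcont hsmooth hpos hτ le_rfl
    hδ.1.le hδ.2.le
  obtain ⟨hH₂, hF₂⟩ := integral_eq_halfAngleTan_sub ha0 hmono hcont hsmooth hpos hτ hδ.1.le
    hδ.2.le le_rfl
  rw [ha0, halfAngleTan_zero, sub_zero] at hF₁
  rw [halfAngleTan_self haτ] at hF₂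
  have hδmem : δ ∈ uIcc 0 τ := mem_uIcc_of_le hδ.1.le hδ.2.le
  have hG₁ : IntervalIntegrable G volume 0 δ :=
    hGint.mono_set (uIcc_subset_uIcc left_mem_uIcc hδmem)
  have hG₂ : IntervalIntegrable G volume δ τ :=
    hGint.mono_set (uIcc_subset_uIcc hδmem right_mem_uIcc)
  have hcomp : ∀ {k t : ℝ}, 0 < t → k * deriv a τ / a τ ≤ deriv a t / a t →
      k * (deriv a τ * a t) ≤ deriv a t * a τ := fun ht h => by
    rw [div_le_div_iff₀ haτ (pos_of_strictMonoOn_Ici ha0 hmono ht)] at h; linarith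
  have h₁ : 2 * (deriv a τ * ∫ t in (0:ℝ)..δ, G t) ≤ halfAngleTan (a τ) (a δ) := by
    rw [← intervalIntegral.integral_const_mul, ← intervalIntegral.integral_const_mul, ← hF₁]
    refine integral_mono_on_of_le_Ioo hδ.1.le ((hG₁.const_mul _).const_mul _) hH₁
      fun t ht => mul_integrand_le ha0 hmono hreg hpos hτ ⟨ht.1, ht.2.trans hδ.2⟩ zero_le_two
        (hcomp ht.1 (hLδ.le.trans (hanti ht.1 hδ.1 ht.2.le)))
  have h₂ : deriv a τ * ∫ t in δ..τ, G t ≤ 1 - halfAngleTan (a τ) (a δ) := by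
    rw [← intervalIntegral.integral_const_mul, ← hF₂]
    refine integral_mono_on_of_le_Ioo hδ.2.le (hG₂.const_mul _) hH₂
      fun t ht => (one_mul _).symm.trans_le
        (mul_integrand_le ha0 hmono hreg hpos hτ ⟨hδ.1.trans ht.1, ht.2⟩ zero_le_one
          (hcomp (hδ.1.trans ht.1) (by simpa using hanti (hδ.1.trans ht.1) hτ ht.2.le)))
  rw [← integral_add_adjacent_intervals hG₁ hG₂, mul_add]
  linarith [halfAngleTan_pos haτ (pos_of_strictMonoOn_Ici ha0 hmono hδ.1)]

end ScaleFactor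

theorem gtautau_at_bigbang_nonzero_general (a : ℝ → ℝ)
    (ha0 : a 0 = 0)
    (hmono : StrictMonoOn a (Set.Ici 0))
    (hcont : ContinuousOn a (Set.Ici 0))
    (hsmooth : ContDiffOn ℝ 2 a (Set.Ioi 0))
    (hreg : ∀ t > (0:ℝ), a t * deriv (deriv a) t / (deriv a t) ^ 2 ≤ 1)
    (K : ℝ)
    (hKbound : ∀ t > (0:ℝ), -K ≤ a t * deriv (deriv a) t / (deriv a t) ^ 2) :
    ∀ τ > (0:ℝ),
      0 < (1 - deriv a τ * ∫ t in (0:ℝ)..τ, (deriv (deriv a) t / (deriv a t) ^ 2) *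
            (a τ / Real.sqrt ((a τ) ^ 2 - (a t) ^ 2) - 1)) ^ 2 := by
  intro τ hτ
  exact pow_pos (sub_pos.2 (deriv_mul_integral_lt_one ha0 hmono hcont hsmooth hreg
    (fun _ ht => deriv_pos_of_stronglyRegular ha0 hmono hsmooth K hKbound ht) hτ)) 2

/-- For a strongly regular scale factor, the limiting metric coefficient
`g_ττ(τ, ρ_{M_τ})` at the big bang is finite and nonzero: `0 < -g_ττ`. -/
theorem gtautau_at_bigbang_nonzero (a : ℝ → ℝ)
    (ha0 : a 0 = 0)
    (hmono : StrictMonoOn a (Set.Ici 0))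
    (hcont : ContinuousOn a (Set.Ici 0))
    (hsmooth : ContDiffOn ℝ 2 a (Set.Ioi 0))
    (hreg : ∀ t > (0:ℝ), a t * deriv (deriv a) t / (deriv a t) ^ 2 ≤ 1)
    (K : ℝ) (hK : 1 ≤ K)
    (hKbound : ∀ t > (0:ℝ), -K ≤ a t * deriv (deriv a) t / (deriv a t) ^ 2) :
    ∀ τ > (0:ℝ),
      0 < (1 - deriv a τ * ∫ t in (0:ℝ)..τ, (deriv (deriv a) t / (deriv a t) ^ 2) *
            (a τ / Real.sqrt ((a τ) ^ 2 - (a t) ^ 2) - 1)) ^ 2 :=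
  gtautau_at_bigbang_nonzero_general a ha0 hmono hcont hsmooth hreg K hKbound
end
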